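/- arXiv:2501.08770 — 5 statements merged into one kernel-verified Lean document; each statement's English description precedes it below -/
import Mathlib

section
/- Under Assumption A1, for every m ∈ C_m and every relaxed control α ∈ 𝒜, the constraint set R[m;α] is a compact subset of 𝒱 (with the product topology of weak convergence). -/
/-!
For each test function `φ`, the two sides of the defining identity of `R[m;α]` are
continuous functionals of `(μ̃, m̃)`: the integrand `L(φ)(t,·,·)` is continuous on `S × W`
because `W` is discrete and `x ↦ P_{t+1}(x,u,m,·)` is weakly continuous. Hence `R[m;α]` is
closed in `𝒱`, which is compact because subprobability measures on the compact space `S × W`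
form a compact space.
-/

open MeasureTheory Filter Topology

/-- Borel subprobability measures on `E` with the topology of weak convergence. -/
abbrev SubProb (E : Type*) [MeasurableSpace E] : Type _ :=
  {μ : FiniteMeasure E // μ Set.univ ≤ 1}

section Framework

variable {S W A : Type*}
variable [MetricSpace S] [CompactSpace S] [Nonempty S]
  [MeasurableSpace S] [BorelSpace S] [SecondCountableTopology S]
variable [Fintype W] [Nonempty W] [TopologicalSpace W] [DiscreteTopology W]
  [MeasurableSpace W] [BorelSpace W]
variable [MetricSpace A] [CompactSpace A] [Nonempty A] [MeasurableSpace A] [BorelSpace A]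
variable {T : ℕ}

variable (P0 : Fin T → W → A → SubProb S → ProbabilityMeasure W)
variable (P1 : Fin T → S → W → SubProb S → ProbabilityMeasure S)

/-- `π⁰_{t+1}(u,{u'};α,m) = ∫_A P⁰_{t+1}(u,a,m,{u'}) α(da)`. -/
noncomputable def pi0 (t : Fin T) (u : W) (α : ProbabilityMeasure A) (m : SubProb S)
    (u' : W) : ℝ :=
  ∫ a, ((P0 t u a m : Measure W) {u'}).toReal ∂(α : Measure A)

/-- The one-step generator
`L(φ)(t,x,u;α,m) = ∫_{S×W} [φ(t+1,x',u') - φ(t,x,u)] π_{t+1}(x,u;α,m;dx',du')`,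
written out using `π_{t+1} = P_{t+1} ⊗ π⁰_{t+1}` and the finiteness of `W`. -/
noncomputable def Lgen (φ : ℕ → S → W → ℝ) (t : Fin T) (x : S) (u : W)
    (α : ProbabilityMeasure A) (m : SubProb S) : ℝ :=
  (∑ u' : W, pi0 P0 t u α m u' * ∫ x', φ ((t : ℕ) + 1) x' u' ∂(P1 t x u m : Measure S))
    - φ (t : ℕ) x u

/-- The linear-programming constraint set `R[m;α]` of admissible occupation-measure pairs. -/
def constraintSet (m0 : ProbabilityMeasure (S × W))
    (m : Fin T → W → SubProb S) (α : Fin T → W → ProbabilityMeasure A) :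
    Set ((Fin (T + 1) → SubProb (S × W)) × (Fin T → SubProb (S × W))) :=
  {p | ∀ φ : ℕ → S → W → ℝ,
    (∀ t : ℕ, Continuous fun q : S × W => φ t q.1 q.2) →
    (∀ t : ℕ, ∃ C : ℝ, ∀ x u, |φ t x u| ≤ C) →
    (∑ t : Fin (T + 1), ∫ q : S × W, φ (t : ℕ) q.1 q.2 ∂((p.1 t).1 : Measure (S × W)))
      = (∫ q : S × W, φ 0 q.1 q.2 ∂(m0 : Measure (S × W)))
        + ∑ t : Fin T, ∫ q : S × W,
            Lgen P0 P1 φ t q.1 q.2 (α t q.2) (m t q.2) ∂((p.2 t).1 : Measure (S × W))}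

end Framework

open BoundedContinuousFunction

instance SubProb.compactSpace {E : Type*} [MeasurableSpace E] [TopologicalSpace E] [T2Space E]
    [BorelSpace E] [CompactSpace E] : CompactSpace (SubProb E) :=
  isCompact_iff_compactSpace.mp (isCompact_setOfPred_finiteMeasure_le_of_compactSpace E 1)

theorem SubProb.continuous_integral {E : Type*} [TopologicalSpace E] [MeasurableSpace E]
    [OpensMeasurableSpace E] (f : E →ᵇ ℝ) :
    Continuous fun μ : SubProb E => ∫ x, f x ∂(μ.1 : Measure E) :=
  (FiniteMeasure.continuous_integral_boundedContinuousFunction f).comp continuous_subtype_val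

theorem continuous_integral_of_continuous_probabilityMeasure {X Y : Type*} [TopologicalSpace X]
    [TopologicalSpace Y] [CompactSpace Y] [MeasurableSpace Y] [OpensMeasurableSpace Y]
    {κ : X → ProbabilityMeasure Y} (hκ : Continuous κ) (f : C(Y, ℝ)) :
    Continuous fun x => ∫ y, f y ∂(κ x : Measure Y) :=
  (ProbabilityMeasure.continuous_integral_boundedContinuousFunction (mkOfCompact f)).comp hκ

section Generator

variable {S W A : Type*} [TopologicalSpace S] [CompactSpace S] [MeasurableSpace S]
  [OpensMeasurableSpace S] [Fintype W] [TopologicalSpace W] [DiscreteTopology W]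
  [MeasurableSpace W] [MeasurableSpace A] {T : ℕ}
  (P0 : Fin T → W → A → SubProb S → ProbabilityMeasure W)
  (P1 : Fin T → S → W → SubProb S → ProbabilityMeasure S)

theorem continuous_Lgen {φ : ℕ → S → W → ℝ}
    (hφ : ∀ t : ℕ, Continuous fun q : S × W => φ t q.1 q.2) (t : Fin T)
    (α : W → ProbabilityMeasure A) (m : W → SubProb S)
    (hP1 : ∀ u, Continuous fun x => P1 t x u (m u)) :
    Continuous fun q : S × W => Lgen P0 P1 φ t q.1 q.2 (α q.2) (m q.2) := by
  have hφ_slice : ∀ (s : ℕ) (u : W), Continuous fun x => φ s x u := fun s u =>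
    (hφ s).comp (continuous_id.prodMk continuous_const)
  refine continuous_prod_of_discrete_right.mpr fun u => ?_
  have hnext : ∀ u',
      Continuous fun x => ∫ x', φ (t + 1) x' u' ∂(P1 t x u (m u) : Measure S) := fun u' =>
    continuous_integral_of_continuous_probabilityMeasure (hP1 u) ⟨_, hφ_slice _ u'⟩
  simp only [Lgen]
  fun_prop

end Generator

theorem isClosed_constraintSet {S W A : Type*} [MetricSpace S] [CompactSpace S]
    [MeasurableSpace S] [OpensMeasurableSpace S] [Fintype W] [TopologicalSpace W]
    [DiscreteTopology W] [MeasurableSpace W] [OpensMeasurableSpace W] [MeasurableSpace A] {T : ℕ}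
    (P0 : Fin T → W → A → SubProb S → ProbabilityMeasure W)
    (P1 : Fin T → S → W → SubProb S → ProbabilityMeasure S)
    (m0 : ProbabilityMeasure (S × W))
    (m : Fin T → W → SubProb S) (α : Fin T → W → ProbabilityMeasure A)
    (hP1 : ∀ t u, Continuous fun x => P1 t x u (m t u)) :
    IsClosed (constraintSet P0 P1 m0 m α) := by
  simp only [constraintSet, Set.ofPred_forall]
  refine isClosed_iInter fun φ => isClosed_iInter fun hφ => isClosed_iInter fun _ =>
    isClosed_eq ?_ ?_
  · exact continuous_finsetSum _ fun t _ =>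
      (SubProb.continuous_integral (mkOfCompact ⟨_, hφ t⟩)).comp (by fun_prop)
  · exact continuous_const.add <| continuous_finsetSum _ fun t _ =>
      (SubProb.continuous_integral
        (mkOfCompact ⟨_, continuous_Lgen P0 P1 hφ t (α t) (m t) (hP1 t)⟩)).comp (by fun_prop)

theorem constraintSet_isCompact_general
    {S W A : Type*}
    [MetricSpace S] [CompactSpace S]
    [MeasurableSpace S] [BorelSpace S]
    [Fintype W] [TopologicalSpace W] [DiscreteTopology W]
    [MeasurableSpace W] [BorelSpace W]
    [MeasurableSpace A]
    {T : ℕ}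
    (P0 : Fin T → W → A → SubProb S → ProbabilityMeasure W)
    (P1 : Fin T → S → W → SubProb S → ProbabilityMeasure S)
    (hP1 : ∀ (t : Fin T) (u : W),
      Continuous fun z : S × SubProb S => P1 t z.1 u z.2)
    (m0 : ProbabilityMeasure (S × W))
    (m : Fin T → W → SubProb S) (α : Fin T → W → ProbabilityMeasure A) :
    IsCompact (constraintSet P0 P1 m0 m α) :=
  (isClosed_constraintSet P0 P1 m0 m α fun t u =>
    (hP1 t u).comp (continuous_id.prodMk continuous_const)).isCompact

/-- Under Assumption A1 (continuity of the transition kernels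
`(a,m) ↦ P⁰_{k+1}(u,a,m,·)` and `(x,m) ↦ P_{k+1}(x,u,m,·)`), for every mean-field flow
`m ∈ C_m` and every relaxed control `α ∈ 𝒜`, the constraint set `R[m;α]` is a compact
subset of `𝒱 = ∏_{t=0}^{T} 𝒫^sub(S×W) × ∏_{t=0}^{T-1} 𝒫^sub(S×W)` with the product
topology of weak convergence. -/
theorem constraintSet_isCompact
    {S W A : Type*}
    [MetricSpace S] [CompactSpace S] [Nonempty S]
    [MeasurableSpace S] [BorelSpace S] [SecondCountableTopology S]
    [Fintype W] [Nonempty W] [TopologicalSpace W] [DiscreteTopology W]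
    [MeasurableSpace W] [BorelSpace W]
    [MetricSpace A] [CompactSpace A] [Nonempty A] [MeasurableSpace A] [BorelSpace A]
    {T : ℕ}
    (P0 : Fin T → W → A → SubProb S → ProbabilityMeasure W)
    (P1 : Fin T → S → W → SubProb S → ProbabilityMeasure S)
    (hP0 : ∀ (t : Fin T) (u : W),
      Continuous fun z : A × SubProb S => P0 t u z.1 z.2)
    (hP1 : ∀ (t : Fin T) (u : W),
      Continuous fun z : S × SubProb S => P1 t z.1 u z.2)
    (m0 : ProbabilityMeasure (S × W))
    (m : Fin T → W → SubProb S) (α : Fin T → W → ProbabilityMeasure A) :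
    IsCompact (constraintSet P0 P1 m0 m α) :=
  constraintSet_isCompact_general P0 P1 hP1 m0 m α
end

section
/- Under Assumptions A1 and A3, the map ((μ̃,m̃),(μ,m)) ↦ J^1(μ̃,m̃;μ,m) from 𝒱×(C_μ×C_m) to ℝ is continuous: if m̃^n_t(u) → m̃_t(u), μ̃^n_t(u) → μ̃_t(u), m^n_t(u) → m_t(u) and μ^n_t(u) → μ_t(u) weakly for all (t,u), then J^1(μ̃^n,m̃^n;μ^n,m^n) → J^1(μ̃,m̃;μ,m). -/
open MeasureTheory Filter Topology
open scoped ENNReal NNReal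

section Framework

variable {S W : Type*}
variable [MetricSpace S] [CompactSpace S] [Nonempty S]
  [MeasurableSpace S] [BorelSpace S] [SecondCountableTopology S]
variable [Fintype W] [Nonempty W] [TopologicalSpace W] [DiscreteTopology W]
  [MeasurableSpace W] [BorelSpace W]
variable {T : ℕ}

/-- The reward functional `J¹` of the minor player's linear programming problem:
`J¹(μ̃,m̃;μ,m) = Σ_{t<T} ∫ f_t(x,u,m_t(u)) dm̃_t + Σ_{t≤T} ∫ g_t(x,u,μ_t(u)) dμ̃_t`. -/
noncomputable def J1 (f : Fin T → S → W → SubProb S → ℝ)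
    (g : Fin (T + 1) → S → W → SubProb S → ℝ)
    (μ : Fin (T + 1) → W → SubProb S) (m : Fin T → W → SubProb S)
    (p : (Fin (T + 1) → SubProb (S × W)) × (Fin T → SubProb (S × W))) : ℝ :=
  (∑ t : Fin T, ∫ q : S × W, f t q.1 q.2 (m t q.2) ∂((p.2 t).1 : Measure (S × W))) +
    ∑ t : Fin (T + 1), ∫ q : S × W, g t q.1 q.2 (μ t q.2) ∂((p.1 t).1 : Measure (S × W))

end Framework

section Aux

/-- A function on a product with a discrete second factor is continuous if all its
slices are continuous. -/
lemma continuous_of_discrete_snd {X Y Z : Type*} [TopologicalSpace X] [TopologicalSpace Y]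
    [DiscreteTopology Y] [TopologicalSpace Z] {F : X × Y → Z}
    (h : ∀ y : Y, Continuous fun x => F (x, y)) : Continuous F := by
  rw [continuous_iff_continuousAt]
  rintro ⟨x, y⟩
  unfold ContinuousAt
  rw [nhds_prod_eq, nhds_discrete Y, Filter.prod_pure, Filter.tendsto_map'_iff]
  exact (h y).tendsto x

/-- Uniform convergence of a continuous family evaluated along a convergent sequence of
parameters, when the base space is compact. -/
lemma tendstoUniformly_of_continuous_param {X P : Type*} [TopologicalSpace X] [CompactSpace X]
    [TopologicalSpace P] {f : X → P → ℝ} (hf : Continuous fun z : X × P => f z.1 z.2)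
    {pseq : ℕ → P} {p : P} (hp : Filter.Tendsto pseq Filter.atTop (nhds p)) :
    TendstoUniformly (fun n x => f x (pseq n)) (fun x => f x p) Filter.atTop := by
  let G : C(P, C(X, ℝ)) :=
    ContinuousMap.curry ⟨fun z : P × X => f z.2 z.1, hf.comp (continuous_swap)⟩
  have hG : Filter.Tendsto (fun n => G (pseq n)) Filter.atTop (nhds (G p)) :=
    (G.continuous.tendsto p).comp hp
  exact ContinuousMap.tendsto_iff_tendstoUniformly.mp hG

/-- The key convergence lemma: integrals of a uniformly convergent sequence of continuous
functions against a weakly convergent sequence of subprobability measures converge. -/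
lemma tendsto_integral_subprob {Ω : Type*} [MeasurableSpace Ω] [TopologicalSpace Ω]
    [OpensMeasurableSpace Ω] [CompactSpace Ω]
    {νseq : ℕ → SubProb Ω} {ν : SubProb Ω}
    (hν : Filter.Tendsto νseq Filter.atTop (nhds ν))
    {Fseq : ℕ → Ω → ℝ} {F : Ω → ℝ} (hFn : ∀ n, Continuous (Fseq n)) (hF : Continuous F)
    (hunif : TendstoUniformly Fseq F Filter.atTop) :
    Filter.Tendsto (fun n => ∫ q, Fseq n q ∂((νseq n).1 : Measure Ω)) Filter.atTop
      (nhds (∫ q, F q ∂(ν.1 : Measure Ω))) := by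
  have hν' : Filter.Tendsto (fun n => (νseq n).1) Filter.atTop (nhds ν.1) :=
    (continuous_subtype_val.tendsto ν).comp hν
  have h2 : Filter.Tendsto (fun n => ∫ q, F q ∂((νseq n).1 : Measure Ω)) Filter.atTop
      (nhds (∫ q, F q ∂(ν.1 : Measure Ω))) :=
    FiniteMeasure.tendsto_iff_forall_integral_tendsto.mp hν'
      (BoundedContinuousFunction.mkOfCompact ⟨F, hF⟩)
  have h1 : Filter.Tendsto
      (fun n => (∫ q, Fseq n q ∂((νseq n).1 : Measure Ω))
        - ∫ q, F q ∂((νseq n).1 : Measure Ω)) Filter.atTop (nhds 0) := by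
    rw [NormedAddCommGroup.tendsto_nhds_zero]
    intro ε hε
    filter_upwards [Metric.tendstoUniformly_iff.mp hunif (ε / 2) (by linarith)] with n hn
    have hint1 : MeasureTheory.Integrable (Fseq n) ((νseq n).1 : Measure Ω) :=
      (BoundedContinuousFunction.mkOfCompact ⟨Fseq n, hFn n⟩).integrable _
    have hint2 : MeasureTheory.Integrable F ((νseq n).1 : Measure Ω) :=
      (BoundedContinuousFunction.mkOfCompact ⟨F, hF⟩).integrable _
    rw [← MeasureTheory.integral_sub hint1 hint2]
    have hb : ‖∫ q, (Fseq n q - F q) ∂((νseq n).1 : Measure Ω)‖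
        ≤ (ε / 2) * (((νseq n).1 : Measure Ω) Set.univ).toReal := by
      apply MeasureTheory.norm_integral_le_of_norm_le_const
      filter_upwards with q
      have := hn q
      rw [Real.dist_eq] at this
      rw [Real.norm_eq_abs, abs_sub_comm]
      exact this.le
    have hmass : (((νseq n).1 : Measure Ω) Set.univ).toReal ≤ 1 := by
      have h1' : ((νseq n).1 : Measure Ω) Set.univ ≤ 1 := by
        have := (νseq n).2
        rw [← FiniteMeasure.ennreal_coeFn_eq_coeFn_toMeasure]
        exact_mod_cast ENNReal.coe_le_coe.mpr this
      have h2' := ENNReal.toReal_mono (by norm_num : (1 : ENNReal) ≠ ⊤) h1'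
      simpa using h2'
    have hmul : (ε / 2) * (((νseq n).1 : Measure Ω) Set.univ).toReal ≤ (ε / 2) * 1 :=
      mul_le_mul_of_nonneg_left hmass (by linarith)
    linarith
  have h3 := h1.add h2
  simp only [sub_add_cancel, zero_add] at h3
  exact h3

end Aux

/-- Under Assumptions A1 and A3, the map
`((μ̃,m̃),(μ,m)) ↦ J¹(μ̃,m̃;μ,m)` from `𝒱 × (C_μ × C_m)` to `ℝ` is continuous: if
`m̃ⁿ_t(u) → m̃_t(u)`, `μ̃ⁿ_t → μ̃_t`, `mⁿ_t(u) → m_t(u)` and `μⁿ_t(u) → μ_t(u)` weakly for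
all `(t,u)`, then `J¹(μ̃ⁿ,m̃ⁿ;μⁿ,mⁿ) → J¹(μ̃,m̃;μ,m)`. -/
theorem J1_continuous
    {S W : Type*}
    [MetricSpace S] [CompactSpace S] [Nonempty S]
    [MeasurableSpace S] [BorelSpace S] [SecondCountableTopology S]
    [Fintype W] [Nonempty W] [TopologicalSpace W] [DiscreteTopology W]
    [MeasurableSpace W] [BorelSpace W]
    {T : ℕ}
    (f : Fin T → S → W → SubProb S → ℝ)
    (g : Fin (T + 1) → S → W → SubProb S → ℝ)
    -- Assumption A3: continuity of the rewards in (x, m)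
    (hf : ∀ (t : Fin T) (u : W), Continuous fun z : S × SubProb S => f t z.1 u z.2)
    (hg : ∀ (t : Fin (T + 1)) (u : W), Continuous fun z : S × SubProb S => g t z.1 u z.2)
    -- the sequences
    (tμseq : ℕ → Fin (T + 1) → SubProb (S × W)) (tμ : Fin (T + 1) → SubProb (S × W))
    (tmseq : ℕ → Fin T → SubProb (S × W)) (tm : Fin T → SubProb (S × W))
    (μseq : ℕ → Fin (T + 1) → W → SubProb S) (μ : Fin (T + 1) → W → SubProb S)
    (mseq : ℕ → Fin T → W → SubProb S) (m : Fin T → W → SubProb S)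
    (htμ : ∀ t, Tendsto (fun n => tμseq n t) atTop (𝓝 (tμ t)))
    (htm : ∀ t, Tendsto (fun n => tmseq n t) atTop (𝓝 (tm t)))
    (hμ : ∀ t u, Tendsto (fun n => μseq n t u) atTop (𝓝 (μ t u)))
    (hm : ∀ t u, Tendsto (fun n => mseq n t u) atTop (𝓝 (m t u))) :
    Tendsto (fun n => J1 f g (μseq n) (mseq n) (tμseq n, tmseq n)) atTop
      (𝓝 (J1 f g μ m (tμ, tm))) := by
  simp only [J1]
  apply Filter.Tendsto.add
  · apply tendsto_finset_sum
    intro t _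
    apply tendsto_integral_subprob (htm t)
    · intro n
      exact continuous_of_discrete_snd fun u =>
        (hf t u).comp ((continuous_id.prodMk continuous_const :
          Continuous fun x : S => (x, mseq n t u)))
    · exact continuous_of_discrete_snd fun u =>
        (hf t u).comp ((continuous_id.prodMk continuous_const :
          Continuous fun x : S => (x, m t u)))
    · rw [Metric.tendstoUniformly_iff]
      intro ε hε
      have H : ∀ u : W, ∀ᶠ n in Filter.atTop,
          ∀ x : S, dist (f t x u (m t u)) (f t x u (mseq n t u)) < ε := fun u =>
        Metric.tendstoUniformly_iff.mp
          (tendstoUniformly_of_continuous_param (hf t u) (hm t u)) ε hε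
      rw [← Filter.eventually_all] at H
      filter_upwards [H] with n hn q
      exact hn q.2 q.1
  · apply tendsto_finset_sum
    intro t _
    apply tendsto_integral_subprob (htμ t)
    · intro n
      exact continuous_of_discrete_snd fun u =>
        (hg t u).comp ((continuous_id.prodMk continuous_const :
          Continuous fun x : S => (x, μseq n t u)))
    · exact continuous_of_discrete_snd fun u =>
        (hg t u).comp ((continuous_id.prodMk continuous_const :
          Continuous fun x : S => (x, μ t u)))
    · rw [Metric.tendstoUniformly_iff]
      intro ε hε
      have H : ∀ u : W, ∀ᶠ n in Filter.atTop,
          ∀ x : S, dist (g t x u (μ t u)) (g t x u (μseq n t u)) < ε := fun u =>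
        Metric.tendstoUniformly_iff.mp
          (tendstoUniformly_of_continuous_param (hg t u) (hμ t u)) ε hε
      rw [← Filter.eventually_all] at H
      filter_upwards [H] with n hn q
      exact hn q.2 q.1
end

section
/- Under Assumption A1, the conditioning mapping Γ : 𝒱×𝒜×C_m → 2^{C_μ×C_m} has a closed graph: if (μ̃^n,m̃^n) → (μ̃,m̃) in 𝒱, α^n → α in 𝒜, m^n → m in C_m, and (μ′^n,m′^n) ∈ Γ((μ̃^n,m̃^n),α^n,m^n) converges to (μ′,m′) in C_μ×C_m, then (μ′,m′) ∈ Γ((μ̃,m̃),α,m). -/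
open MeasureTheory Filter Topology
open scoped NNReal ENNReal

section Framework

variable {S W A : Type*}
variable [MetricSpace S] [CompactSpace S] [Nonempty S]
  [MeasurableSpace S] [BorelSpace S] [SecondCountableTopology S]
variable [Fintype W] [Nonempty W] [TopologicalSpace W] [DiscreteTopology W]
  [MeasurableSpace W] [BorelSpace W]
variable [MetricSpace A] [CompactSpace A] [Nonempty A] [MeasurableSpace A] [BorelSpace A]
variable {T : ℕ}

variable (P0 : Fin T → W → A → SubProb S → ProbabilityMeasure W)
variable (P1 : Fin T → S → W → SubProb S → ProbabilityMeasure S)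

/-- `Θ̂(μ,m,α)`: the set of maximizers of `J¹(·;μ,m)` over `R[m;α]`. -/
def ThetaHat (f : Fin T → S → W → SubProb S → ℝ)
    (g : Fin (T + 1) → S → W → SubProb S → ℝ)
    (m0 : ProbabilityMeasure (S × W))
    (μ : Fin (T + 1) → W → SubProb S) (m : Fin T → W → SubProb S)
    (α : Fin T → W → ProbabilityMeasure A) :
    Set ((Fin (T + 1) → SubProb (S × W)) × (Fin T → SubProb (S × W))) :=
  {p | p ∈ constraintSet P0 P1 m0 m α ∧
    ∀ q ∈ constraintSet P0 P1 m0 m α, J1 f g μ m q ≤ J1 f g μ m p}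

/-- The marginal law `p_t(·;α,m)` of the major player's trajectory process, defined
recursively from the `W`-marginal of the initial law `m₀*`. -/
noncomputable def majLaw (m0 : ProbabilityMeasure (S × W))
    (α : Fin T → W → ProbabilityMeasure A) (m : Fin T → W → SubProb S) :
    ℕ → W → ℝ
  | 0, u => ((m0 : Measure (S × W)) (Set.univ ×ˢ ({u} : Set W))).toReal
  | (t + 1), u =>
      if h : t < T then
        ∑ u' : W, majLaw m0 α m t u' * pi0 P0 ⟨t, h⟩ u' (α ⟨t, h⟩ u') (m ⟨t, h⟩ u') u
      else 0

/-- The conditioning mapping `Γ((μ̃,m̃),α,m)`: all pairs `(μ',m')` disintegrating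
`(μ̃,m̃)` over the major marginal law `p_t(·;α,m)`. -/
def GammaMap (m0 : ProbabilityMeasure (S × W))
    (α : Fin T → W → ProbabilityMeasure A) (m : Fin T → W → SubProb S)
    (p : (Fin (T + 1) → SubProb (S × W)) × (Fin T → SubProb (S × W))) :
    Set ((Fin (T + 1) → W → SubProb S) × (Fin T → W → SubProb S)) :=
  {μm | (∀ (t : Fin (T + 1)) (u : W) (B : Set S), MeasurableSet B →
          ((p.1 t).1 : Measure (S × W)) (B ×ˢ ({u} : Set W)) =
            ENNReal.ofReal (majLaw P0 m0 α m (t : ℕ) u) * ((μm.1 t u).1 : Measure S) B)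
      ∧ (∀ (t : Fin T) (u : W) (B : Set S), MeasurableSet B →
          ((p.2 t).1 : Measure (S × W)) (B ×ˢ ({u} : Set W)) =
            ENNReal.ofReal (majLaw P0 m0 α m (t : ℕ) u) * ((μm.2 t u).1 : Measure S) B)}

end Framework

/-!
Membership in `Γ` says that, for each time `t` and major state `u`, the slice `ν(· × {u})` of the
occupation measure `ν` equals `p_t(u; α, m)` times the conditional law. Since `S × {u}` is clopen,
restricting to it and projecting to `S` is weakly continuous; and `p_t(u; α, m)` is continuous
in `(α, m)` by induction on `t`, because `π⁰` integrates a jointly continuous function against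
`α` on the compact space `A`. So the defining identity equates two continuous maps into the
Hausdorff space of finite measures on `S`, and it survives passage to the limit.
-/

open scoped BoundedContinuousFunction

namespace MeasureTheory

lemma FiniteMeasure.continuous_restrict_of_isClopen {Ω : Type*} [TopologicalSpace Ω]
    [MeasurableSpace Ω] [OpensMeasurableSpace Ω] {E : Set Ω} (hE : IsClopen E) :
    Continuous fun ν : FiniteMeasure Ω => ν.restrict E := by
  refine FiniteMeasure.continuous_iff_forall_continuous_integral.2 fun f => ?_
  have h : ∀ ν : FiniteMeasure Ω, ∫ ω, f ω ∂(ν.restrict E : Measure Ω)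
      = ∫ ω, (BoundedContinuousFunction.indicator E hE * f) ω ∂(ν : Measure Ω) := fun ν => by
    rw [FiniteMeasure.restrict_measure_eq, ← integral_indicator hE.isOpen.measurableSet]
    congr 1 with ω
    by_cases hω : ω ∈ E <;> simp [hω]
  simpa only [h] using FiniteMeasure.continuous_integral_boundedContinuousFunction _

lemma ProbabilityMeasure.continuous_integral_prod_boundedContinuousFunction {Ω : Type*}
    [TopologicalSpace Ω] [MeasurableSpace Ω] [OpensMeasurableSpace Ω] :
    Continuous fun q : ProbabilityMeasure Ω × (Ω →ᵇ ℝ) => ∫ ω, q.2 ω ∂(q.1 : Measure Ω) := by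
  refine continuous_iff_continuousAt.2 fun ⟨μ, g⟩ => ?_
  have h_err : Tendsto (fun q : ProbabilityMeasure Ω × (Ω →ᵇ ℝ) =>
      ∫ ω, (q.2 - g) ω ∂(q.1 : Measure Ω)) (𝓝 (μ, g)) (𝓝 0) := by
    refine squeeze_zero_norm (fun q => (q.2 - g).norm_integral_le_norm _) ?_
    simpa [← dist_eq_norm] using
      (continuous_snd.dist (continuous_const (y := g))).tendsto (μ, g)
  have h_fixed : Tendsto (fun q : ProbabilityMeasure Ω × (Ω →ᵇ ℝ) =>
      ∫ ω, g ω ∂(q.1 : Measure Ω)) (𝓝 (μ, g)) (𝓝 (∫ ω, g ω ∂(μ : Measure Ω))) :=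
    ((ProbabilityMeasure.continuous_integral_boundedContinuousFunction g).comp
      continuous_fst).tendsto _
  rw [ContinuousAt, ← zero_add (∫ ω, g ω ∂(μ : Measure Ω))]
  refine (h_err.add h_fixed).congr fun q => ?_
  rw [BoundedContinuousFunction.coe_sub, Pi.sub_def,
    integral_sub (q.2.integrable _) (g.integrable _), sub_add_cancel]

lemma ProbabilityMeasure.continuous_integral_of_continuous_uncurry {A M : Type*}
    [TopologicalSpace A] [CompactSpace A] [MeasurableSpace A] [OpensMeasurableSpace A]
    [TopologicalSpace M] {f : A × M → ℝ} (hf : Continuous f) :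
    Continuous fun q : ProbabilityMeasure A × M => ∫ a, f (a, q.2) ∂(q.1 : Measure A) := by
  let F : C(M, C(A, ℝ)) :=
    ContinuousMap.curry ((⟨f, hf⟩ : C(A × M, ℝ)).comp ContinuousMap.prodSwap)
  have hF : Continuous fun m => ContinuousMap.isometryEquivBoundedOfCompact A ℝ (F m) :=
    (ContinuousMap.isometryEquivBoundedOfCompact A ℝ).continuous.comp F.continuous
  exact ProbabilityMeasure.continuous_integral_prod_boundedContinuousFunction.comp
    (continuous_fst.prodMk (hF.comp continuous_snd) :
      Continuous fun q : ProbabilityMeasure A × M => (q.1, _))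

lemma ProbabilityMeasure.continuous_measureReal_of_isClopen {Ω : Type*} [TopologicalSpace Ω]
    [MeasurableSpace Ω] [OpensMeasurableSpace Ω] {E : Set Ω} (hE : IsClopen E) :
    Continuous fun ν : ProbabilityMeasure Ω => (ν : Measure Ω).real E := by
  simpa [BoundedContinuousFunction.indicator, integral_indicator_one hE.isOpen.measurableSet] using
    ProbabilityMeasure.continuous_integral_boundedContinuousFunction
      (BoundedContinuousFunction.indicator E hE)

end MeasureTheory

namespace MeasureTheory.FiniteMeasure

variable {X Y : Type*} [MeasurableSpace X] [MeasurableSpace Y]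

noncomputable def sliceAt (u : Y) (ν : FiniteMeasure (X × Y)) : FiniteMeasure X :=
  (ν.restrict (Set.univ ×ˢ {u})).map Prod.fst

lemma sliceAt_apply (u : Y) (ν : FiniteMeasure (X × Y))
    {B : Set X} (hB : MeasurableSet B) :
    (sliceAt u ν : Measure X) B = (ν : Measure (X × Y)) (B ×ˢ {u}) := by
  rw [sliceAt, toMeasure_map, Measure.map_apply measurable_fst hB, restrict_measure_eq,
    Measure.restrict_apply (measurable_fst hB), Set.univ_prod, Set.prod_eq]

variable [TopologicalSpace X] [TopologicalSpace Y]

lemma continuous_sliceAt [DiscreteTopology Y] [OpensMeasurableSpace (X × Y)] [BorelSpace X]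
    (u : Y) : Continuous (sliceAt (X := X) u) :=
  (continuous_map continuous_fst).comp
    (continuous_restrict_of_isClopen (isClopen_univ.prod (isClopen_discrete {u})))

lemma isClosed_setOf_forall_measure_prod_singleton_eq [HasOuterApproxClosed X] [BorelSpace X]
    [DiscreteTopology Y] [OpensMeasurableSpace (X × Y)] (u : Y) :
    IsClosed {q : FiniteMeasure (X × Y) × ℝ × FiniteMeasure X | ∀ B, MeasurableSet B →
      (q.1 : Measure (X × Y)) (B ×ˢ {u}) = ENNReal.ofReal q.2.1 * (q.2.2 : Measure X) B} := by
  -- `ENNReal.ofReal c` is `c.toNNReal` by definition, so this is the equalizer of two maps.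
  have h : {q : FiniteMeasure (X × Y) × ℝ × FiniteMeasure X | ∀ B, MeasurableSet B →
      (q.1 : Measure (X × Y)) (B ×ˢ {u}) = ENNReal.ofReal q.2.1 * (q.2.2 : Measure X) B}
      = {q | sliceAt u q.1 = q.2.1.toNNReal • q.2.2} := by
    ext q
    rw [Set.mem_ofPred_eq, Set.mem_ofPred_eq, ← toMeasure_injective.eq_iff, Measure.ext_iff]
    refine forall₂_congr fun B hB => ?_
    rw [sliceAt_apply u _ hB, toMeasure_smul, Measure.smul_apply, ENNReal.smul_def, smul_eq_mul]
    rfl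
  rw [h]
  exact isClosed_eq ((continuous_sliceAt u).comp continuous_fst)
    ((continuous_real_toNNReal.comp (continuous_fst.comp continuous_snd)).smul
      (continuous_snd.comp continuous_snd))

lemma forall_measure_prod_singleton_eq_of_tendsto [HasOuterApproxClosed X] [BorelSpace X]
    [DiscreteTopology Y] [OpensMeasurableSpace (X × Y)] (u : Y) {ι : Type*} {l : Filter ι}
    [l.NeBot] {νs : ι → FiniteMeasure (X × Y)} {ν : FiniteMeasure (X × Y)} {cs : ι → ℝ} {c : ℝ}
    {ρs : ι → FiniteMeasure X} {ρ : FiniteMeasure X} (hν : Tendsto νs l (𝓝 ν))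
    (hc : Tendsto cs l (𝓝 c)) (hρ : Tendsto ρs l (𝓝 ρ))
    (h : ∀ i B, MeasurableSet B →
      (νs i : Measure (X × Y)) (B ×ˢ {u}) = ENNReal.ofReal (cs i) * (ρs i : Measure X) B) :
    ∀ B, MeasurableSet B →
      (ν : Measure (X × Y)) (B ×ˢ {u}) = ENNReal.ofReal c * (ρ : Measure X) B :=
  (isClosed_setOf_forall_measure_prod_singleton_eq u).mem_of_tendsto
    (hν.prodMk_nhds (hc.prodMk_nhds hρ)) (Eventually.of_forall h)

end MeasureTheory.FiniteMeasure

section Framework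

variable {S W A : Type*}
  [TopologicalSpace S] [MeasurableSpace S] [OpensMeasurableSpace S]
  [TopologicalSpace W] [DiscreteTopology W] [MeasurableSpace W] [OpensMeasurableSpace W]
  [TopologicalSpace A] [CompactSpace A] [MeasurableSpace A] [OpensMeasurableSpace A]
  {T : ℕ} (P0 : Fin T → W → A → SubProb S → ProbabilityMeasure W)

lemma continuous_pi0 {t : Fin T} {u : W}
    (hP0 : Continuous fun z : A × SubProb S => P0 t u z.1 z.2) (u' : W) :
    Continuous fun q : ProbabilityMeasure A × SubProb S => pi0 P0 t u q.1 q.2 u' :=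
  ProbabilityMeasure.continuous_integral_of_continuous_uncurry
    ((ProbabilityMeasure.continuous_measureReal_of_isClopen (isClopen_discrete {u'})).comp hP0)

lemma continuous_majLaw [Fintype W]
    (hP0 : ∀ (t : Fin T) (u : W), Continuous fun z : A × SubProb S => P0 t u z.1 z.2)
    (m0 : ProbabilityMeasure (S × W)) (t : ℕ) (u : W) :
    Continuous fun q : (Fin T → W → ProbabilityMeasure A) × (Fin T → W → SubProb S) =>
      majLaw P0 m0 q.1 q.2 t u := by
  induction t generalizing u with
  | zero => exact continuous_const
  | succ t ih =>
    by_cases ht : t < T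
    · simp only [majLaw, dif_pos ht]
      refine continuous_finsetSum _ fun u' _ => (ih u').mul ?_
      have h_eval : Continuous fun q : (Fin T → W → ProbabilityMeasure A) ×
          (Fin T → W → SubProb S) => (q.1 ⟨t, ht⟩ u', q.2 ⟨t, ht⟩ u') := by fun_prop
      exact (continuous_pi0 P0 (hP0 _ u') u).comp h_eval
    · simp only [majLaw, dif_neg ht]
      exact continuous_const

end Framework

theorem gammaMap_closedGraph_general
    {S W A : Type*}
    [MetricSpace S]
    [MeasurableSpace S] [BorelSpace S]
    [Fintype W] [TopologicalSpace W] [DiscreteTopology W]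
    [MeasurableSpace W] [BorelSpace W]
    [MetricSpace A] [CompactSpace A] [MeasurableSpace A] [BorelSpace A]
    {T : ℕ}
    (P0 : Fin T → W → A → SubProb S → ProbabilityMeasure W)
    (hP0 : ∀ (t : Fin T) (u : W),
      Continuous fun z : A × SubProb S => P0 t u z.1 z.2)
    (m0 : ProbabilityMeasure (S × W))
    -- the sequences of occupation measures, controls and mean-field flows
    (pseq : ℕ → (Fin (T + 1) → SubProb (S × W)) × (Fin T → SubProb (S × W)))
    (p : (Fin (T + 1) → SubProb (S × W)) × (Fin T → SubProb (S × W)))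
    (αseq : ℕ → Fin T → W → ProbabilityMeasure A) (α : Fin T → W → ProbabilityMeasure A)
    (mseq : ℕ → Fin T → W → SubProb S) (m : Fin T → W → SubProb S)
    (μ'seq : ℕ → Fin (T + 1) → W → SubProb S) (μ' : Fin (T + 1) → W → SubProb S)
    (m'seq : ℕ → Fin T → W → SubProb S) (m' : Fin T → W → SubProb S)
    (hp : Tendsto pseq atTop (𝓝 p))
    (hα : Tendsto αseq atTop (𝓝 α))
    (hm : Tendsto mseq atTop (𝓝 m))
    (hmem : ∀ n, ((μ'seq n, m'seq n) :
        (Fin (T + 1) → W → SubProb S) × (Fin T → W → SubProb S)) ∈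
      GammaMap P0 m0 (αseq n) (mseq n) (pseq n))
    (hμ' : Tendsto μ'seq atTop (𝓝 μ'))
    (hm' : Tendsto m'seq atTop (𝓝 m')) :
    ((μ', m') : (Fin (T + 1) → W → SubProb S) × (Fin T → W → SubProb S)) ∈
      GammaMap P0 m0 α m p := by
  have h_law (t : ℕ) (u : W) : Tendsto (fun n => majLaw P0 m0 (αseq n) (mseq n) t u) atTop
      (𝓝 (majLaw P0 m0 α m t u)) :=
    ((continuous_majLaw P0 hP0 m0 t u).tendsto (α, m)).comp (hα.prodMk_nhds hm)
  refine ⟨fun t u => ?_, fun t u => ?_⟩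
  · have hν : Tendsto (fun n => ((pseq n).1 t).1) atTop (𝓝 (p.1 t).1) :=
      (continuous_subtype_val.tendsto _).comp (tendsto_pi_nhds.1 (hp.fst_nhds) t)
    have hρ : Tendsto (fun n => (μ'seq n t u).1) atTop (𝓝 (μ' t u).1) :=
      (continuous_subtype_val.tendsto _).comp (tendsto_pi_nhds.1 (tendsto_pi_nhds.1 hμ' t) u)
    exact FiniteMeasure.forall_measure_prod_singleton_eq_of_tendsto u hν (h_law t u) hρ
      fun n => (hmem n).1 t u
  · have hν : Tendsto (fun n => ((pseq n).2 t).1) atTop (𝓝 (p.2 t).1) :=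
      (continuous_subtype_val.tendsto _).comp (tendsto_pi_nhds.1 (hp.snd_nhds) t)
    have hρ : Tendsto (fun n => (m'seq n t u).1) atTop (𝓝 (m' t u).1) :=
      (continuous_subtype_val.tendsto _).comp (tendsto_pi_nhds.1 (tendsto_pi_nhds.1 hm' t) u)
    exact FiniteMeasure.forall_measure_prod_singleton_eq_of_tendsto u hν (h_law t u) hρ
      fun n => (hmem n).2 t u

/-- Under Assumption A1, the conditioning mapping
`Γ : 𝒱 × 𝒜 × C_m → 2^{C_μ × C_m}` has a closed graph: if `(μ̃ⁿ,m̃ⁿ) → (μ̃,m̃)` in `𝒱`,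
`αⁿ → α` in `𝒜`, `mⁿ → m` in `C_m` (all in the product topologies of weak convergence),
and `(μ'ⁿ,m'ⁿ) ∈ Γ((μ̃ⁿ,m̃ⁿ),αⁿ,mⁿ)` converges to `(μ',m')` in `C_μ × C_m`, then
`(μ',m') ∈ Γ((μ̃,m̃),α,m)`. -/
theorem gammaMap_closedGraph
    {S W A : Type*}
    [MetricSpace S] [CompactSpace S] [Nonempty S]
    [MeasurableSpace S] [BorelSpace S] [SecondCountableTopology S]
    [Fintype W] [Nonempty W] [TopologicalSpace W] [DiscreteTopology W]
    [MeasurableSpace W] [BorelSpace W]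
    [MetricSpace A] [CompactSpace A] [Nonempty A] [MeasurableSpace A] [BorelSpace A]
    {T : ℕ}
    (P0 : Fin T → W → A → SubProb S → ProbabilityMeasure W)
    (P1 : Fin T → S → W → SubProb S → ProbabilityMeasure S)
    (hP0 : ∀ (t : Fin T) (u : W),
      Continuous fun z : A × SubProb S => P0 t u z.1 z.2)
    (hP1 : ∀ (t : Fin T) (u : W),
      Continuous fun z : S × SubProb S => P1 t z.1 u z.2)
    (m0 : ProbabilityMeasure (S × W))
    -- the sequences of occupation measures, controls and mean-field flows
    (pseq : ℕ → (Fin (T + 1) → SubProb (S × W)) × (Fin T → SubProb (S × W)))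
    (p : (Fin (T + 1) → SubProb (S × W)) × (Fin T → SubProb (S × W)))
    (αseq : ℕ → Fin T → W → ProbabilityMeasure A) (α : Fin T → W → ProbabilityMeasure A)
    (mseq : ℕ → Fin T → W → SubProb S) (m : Fin T → W → SubProb S)
    (μ'seq : ℕ → Fin (T + 1) → W → SubProb S) (μ' : Fin (T + 1) → W → SubProb S)
    (m'seq : ℕ → Fin T → W → SubProb S) (m' : Fin T → W → SubProb S)
    (hp : Tendsto pseq atTop (𝓝 p))
    (hα : Tendsto αseq atTop (𝓝 α))
    (hm : Tendsto mseq atTop (𝓝 m))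
    (hmem : ∀ n, ((μ'seq n, m'seq n) :
        (Fin (T + 1) → W → SubProb S) × (Fin T → W → SubProb S)) ∈
      GammaMap P0 m0 (αseq n) (mseq n) (pseq n))
    (hμ' : Tendsto μ'seq atTop (𝓝 μ'))
    (hm' : Tendsto m'seq atTop (𝓝 m')) :
    ((μ', m') : (Fin (T + 1) → W → SubProb S) × (Fin T → W → SubProb S)) ∈
      GammaMap P0 m0 α m p :=
  gammaMap_closedGraph_general P0 hP0 m0 pseq p αseq α mseq m μ'seq μ' m'seq m' hp hα hm hmem hμ'
    hm'
end

section
/- Let A ⊂ ℝ^ℓ be compact with Leb(A) > 0, let F_n, F : A → ℝ be continuous with F_n → F uniformly on A, and let λ_n ∈ (0,1] with λ_n ↓ 0. Define Gibbs probability measures α_n on A by α_n(da) := e^{F_n(a)/λ_n} da / ∫_A e^{F_n(a′)/λ_n} da′ (da = Lebesgue measure restricted to A). Assume Leb({a ∈ A : F(a) ≥ max_A F − ε}) > 0 for every ε > 0, and that α_n → α weakly for some α ∈ 𝒫(A). Then supp(α) ⊆ argmax_{a∈A} F(a); equivalently, α(K) = 0 for every compact K ⊂ A with sup_K F < max_A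 F. -/
open MeasureTheory Filter Topology

/-!
Let `M = max_A F`, `m = sup_K F` and `3δ = M - m`, so that `F ≥ M - δ` on the near-maximiser set
`S`, of positive volume, and `F < m + δ = M - 2δ` on `A ∩ U` for the open neighbourhood
`U = (A ∩ {F ≥ m + δ})ᶜ` of `K`. Once `F_n` is uniformly `δ/3`-close to `F`, the normalising
constant `∫_A e^{F_n/λ_n}` is at least `vol(S) e^{(M - 4δ/3)/λ_n}`, while the unnormalised density
is at most `e^{(M - 5δ/3)/λ_n}` on `A ∩ U`. Hence `α_n(U) ≤ C e^{-δ/(3λ_n)} → 0`, and the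
portmanteau theorem gives `α(K) ≤ α(U) ≤ liminf α_n(U) = 0`.
-/

lemma tendsto_exp_neg_div_nhds_zero {ι : Type*} {l : Filter ι} {lam : ι → ℝ} {ε : ℝ}
    (hε : 0 < ε) (hpos : ∀ᶠ i in l, 0 < lam i) (hlam : Tendsto lam l (𝓝 0)) :
    Tendsto (fun i => Real.exp (-ε / lam i)) l (𝓝 0) := by
  have hinv := (tendsto_nhdsWithin_iff.2 ⟨hlam, hpos⟩).inv_tendsto_nhdsGT_zero.const_mul_atTop hε
  refine (Real.tendsto_exp_neg_atTop_nhds_zero.comp hinv).congr fun i => ?_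
  rw [Function.comp_apply, neg_div, div_eq_mul_inv, Pi.inv_apply]

lemma ProbabilityMeasure.measure_eq_zero_of_tendsto_measure_open {Ω ι : Type*}
    [MeasurableSpace Ω] [TopologicalSpace Ω] [OpensMeasurableSpace Ω] [HasOuterApproxClosed Ω]
    {L : Filter ι} [L.NeBot] {μ : ProbabilityMeasure Ω} {μs : ι → ProbabilityMeasure Ω}
    (hμs : Tendsto μs L (𝓝 μ)) {G : Set Ω} (hG : IsOpen G)
    (h : Tendsto (fun i => (μs i : Measure Ω) G) L (𝓝 0)) : (μ : Measure Ω) G = 0 := by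
  have := ProbabilityMeasure.le_liminf_measure_open_of_tendsto hμs hG
  rwa [h.liminf_eq, nonpos_iff_eq_zero] at this

section Gibbs

variable {X : Type*} [MeasurableSpace X] (μ : Measure X) {A S U : Set X} {f : X → ℝ}
  {L b c δ : ℝ}

lemma exp_mul_measureReal_le_setIntegral_exp (hL : 0 ≤ L) (hS : MeasurableSet S) (hSA : S ⊆ A)
    (hSfin : μ S ≠ ⊤) (hint : IntegrableOn (fun a => Real.exp (f a / L)) A μ)
    (hfS : ∀ a ∈ S, c ≤ f a) :
    Real.exp (c / L) * μ.real S ≤ ∫ a in A, Real.exp (f a / L) ∂μ :=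
  calc Real.exp (c / L) * μ.real S ≤ ∫ a in S, Real.exp (f a / L) ∂μ :=
        setIntegral_ge_of_const_le_real hS hSfin (fun a ha => by gcongr; exact hfS a ha)
          (hint.mono_set hSA)
    _ ≤ ∫ a in A, Real.exp (f a / L) ∂μ :=
        setIntegral_mono_set hint (ae_of_all _ fun _ => (Real.exp_pos _).le) hSA.eventuallyLE

lemma gibbs_measure_apply_le (hL : 0 < L) (hA : μ A ≠ ⊤) (hS : MeasurableSet S) (hSA : S ⊆ A)
    (hSpos : 0 < μ S) (hU : MeasurableSet U)
    (hint : IntegrableOn (fun a => Real.exp (f a / L)) A μ)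
    (hfU : ∀ a ∈ U ∩ A, f a ≤ b) (hfS : ∀ a ∈ S, b + δ ≤ f a) :
    (μ.restrict A).withDensity (fun a => ENNReal.ofReal
        (Real.exp (f a / L) / ∫ a' in A, Real.exp (f a' / L) ∂μ)) U ≤
      ENNReal.ofReal (μ.real A / μ.real S * Real.exp (-δ / L)) := by
  set Z := ∫ a' in A, Real.exp (f a' / L) ∂μ
  have hSfin : μ S ≠ ⊤ := ne_top_of_le_ne_top hA (measure_mono hSA)
  have hSreal : 0 < μ.real S := ENNReal.toReal_pos hSpos.ne' hSfin
  have hZ : Real.exp ((b + δ) / L) * μ.real S ≤ Z :=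
    exp_mul_measureReal_le_setIntegral_exp μ hL.le hS hSA hSfin hint hfS
  have hZpos : 0 < Z := lt_of_lt_of_le (by positivity) hZ
  have hdensity : ∀ a ∈ U ∩ A,
      ENNReal.ofReal (Real.exp (f a / L) / Z) ≤ ENNReal.ofReal (Real.exp (b / L) / Z) :=
    fun a ha => by gcongr; exact hfU a ha
  have hratio : Real.exp (b / L) / Z * μ.real A ≤ μ.real A / μ.real S * Real.exp (-δ / L) :=
    calc Real.exp (b / L) / Z * μ.real A
        ≤ Real.exp (b / L) / (Real.exp ((b + δ) / L) * μ.real S) * μ.real A := by gcongr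
      _ = μ.real A / μ.real S * Real.exp (-δ / L) := by
        rw [add_div, Real.exp_add, neg_div, Real.exp_neg]
        field_simp
  calc _ = ∫⁻ a in U ∩ A, ENNReal.ofReal (Real.exp (f a / L) / Z) ∂μ := by
        rw [withDensity_apply _ hU, Measure.restrict_restrict hU]
    _ ≤ ∫⁻ _ in U ∩ A, ENNReal.ofReal (Real.exp (b / L) / Z) ∂μ :=
        setLIntegral_mono measurable_const hdensity
    _ = ENNReal.ofReal (Real.exp (b / L) / Z) * μ (U ∩ A) := setLIntegral_const _ _
    _ ≤ ENNReal.ofReal (Real.exp (b / L) / Z) * μ A := by gcongr; exact Set.inter_subset_right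
    _ = ENNReal.ofReal (Real.exp (b / L) / Z * μ.real A) := by
        rw [ENNReal.ofReal_mul (by positivity), ofReal_measureReal hA]
    _ ≤ _ := ENNReal.ofReal_le_ofReal hratio

lemma tendsto_gibbs_measure_apply_nhds_zero {ι : Type*} {l : Filter ι} {fs : ι → X → ℝ}
    {F : X → ℝ} {lam : ι → ℝ} (hA : μ A ≠ ⊤) (hS : MeasurableSet S) (hSA : S ⊆ A)
    (hSpos : 0 < μ S) (hU : MeasurableSet U)
    (hint : ∀ i, IntegrableOn (fun a => Real.exp (fs i a / lam i)) A μ)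
    (hunif : TendstoUniformlyOn fs F l A) (hlam : ∀ᶠ i in l, 0 < lam i)
    (hlam0 : Tendsto lam l (𝓝 0)) (hδ : 0 < δ)
    (hFU : ∀ a ∈ U ∩ A, F a ≤ b) (hFS : ∀ a ∈ S, b + δ ≤ F a) :
    Tendsto (fun i => (μ.restrict A).withDensity (fun a => ENNReal.ofReal
        (Real.exp (fs i a / lam i) / ∫ a' in A, Real.exp (fs i a' / lam i) ∂μ)) U) l (𝓝 0) := by
  have hbound : ∀ᶠ i in l, (μ.restrict A).withDensity (fun a => ENNReal.ofReal
      (Real.exp (fs i a / lam i) / ∫ a' in A, Real.exp (fs i a' / lam i) ∂μ)) U ≤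
      ENNReal.ofReal (μ.real A / μ.real S * Real.exp (-(δ / 3) / lam i)) := by
    filter_upwards [Metric.tendstoUniformlyOn_iff.mp hunif (δ / 3) (by positivity), hlam]
      with i hclose hlami
    have hclose' : ∀ a ∈ A, |F a - fs i a| < δ / 3 := hclose
    refine gibbs_measure_apply_le μ hlami hA hS hSA hSpos hU (hint i) (b := b + δ / 3)
      (fun a ha => ?_) (fun a ha => ?_)
    · linarith [hFU a ha, (abs_lt.1 (hclose' a ha.2)).1]
    · linarith [hFS a ha, (abs_lt.1 (hclose' a (hSA ha))).2]
  have hlim : Tendsto (fun i => ENNReal.ofReal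
      (μ.real A / μ.real S * Real.exp (-(δ / 3) / lam i))) l (𝓝 0) := by
    simpa using ENNReal.tendsto_ofReal
      ((tendsto_exp_neg_div_nhds_zero (by positivity) hlam hlam0).const_mul _)
  exact tendsto_of_tendsto_of_tendsto_of_le_of_le' tendsto_const_nhds hlim
    (Eventually.of_forall fun _ => zero_le) hbound

end Gibbs

theorem gibbs_measures_concentrate_on_argmax_general
    {l : ℕ}
    (Aset : Set (EuclideanSpace ℝ (Fin l)))
    (hAcompact : IsCompact Aset)
    (Fseq : ℕ → EuclideanSpace ℝ (Fin l) → ℝ) (F : EuclideanSpace ℝ (Fin l) → ℝ)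
    (hFcont : ContinuousOn F Aset) (hFncont : ∀ n, ContinuousOn (Fseq n) Aset)
    (hFunif : TendstoUniformlyOn Fseq F atTop Aset)
    (lam : ℕ → ℝ) (hlam : ∀ n, lam n ∈ Set.Ioc (0 : ℝ) 1)
    (hlam0 : Tendsto lam atTop (𝓝 (0 : ℝ)))
    -- the Gibbs measures α_n, characterized measure-theoretically
    (αseq : ℕ → ProbabilityMeasure (EuclideanSpace ℝ (Fin l)))
    (hgibbs : ∀ n, (αseq n : Measure (EuclideanSpace ℝ (Fin l))) =
      ((MeasureTheory.volume.restrict Aset).withDensity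
        (fun a => ENNReal.ofReal (Real.exp (Fseq n a / lam n) /
          ∫ a' in Aset, Real.exp (Fseq n a' / lam n)))))
    -- positivity of the near-maximizer sets (a consequence of the cone condition)
    (hpos : ∀ ε : ℝ, 0 < ε →
      0 < MeasureTheory.volume {a ∈ Aset | sSup (F '' Aset) - ε ≤ F a})
    (α : ProbabilityMeasure (EuclideanSpace ℝ (Fin l)))
    (hconv : Tendsto αseq atTop (𝓝 α)) :
    ∀ K : Set (EuclideanSpace ℝ (Fin l)), IsCompact K → K ⊆ Aset →
      sSup (F '' K) < sSup (F '' Aset) →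
      (α : Measure (EuclideanSpace ℝ (Fin l))) K = 0 := by
  intro K hK hKA hKlt
  set M := sSup (F '' Aset)
  set m := sSup (F '' K)
  set δ := (M - m) / 3
  have hδ : 0 < δ := by simp only [δ]; linarith
  have hgap : M - m = 3 * δ := by simp only [δ]; ring
  have hFK : ∀ a ∈ K, F a ≤ m := fun a ha =>
    le_csSup (hK.image_of_continuousOn (hFcont.mono hKA)).bddAbove ⟨a, ha, rfl⟩
  set S := {a ∈ Aset | M - δ ≤ F a}
  set U := {a ∈ Aset | m + δ ≤ F a}ᶜ
  have hS : IsClosed S := hAcompact.isClosed.isClosed_le continuousOn_const hFcont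
  have hU : IsOpen U := (hAcompact.isClosed.isClosed_le continuousOn_const hFcont).isOpen_compl
  have hKU : K ⊆ U := fun a ha hle => by linarith [hFK a ha, hle.2]
  have hint : ∀ n, IntegrableOn (fun a => Real.exp (Fseq n a / lam n)) Aset volume := fun n =>
    (Real.continuous_exp.comp_continuousOn ((hFncont n).div_const _)).integrableOn_compact hAcompact
  have hαseqU : Tendsto (fun n => (αseq n : Measure (EuclideanSpace ℝ (Fin l))) U) atTop (𝓝 0) := by
    simp only [hgibbs]
    refine tendsto_gibbs_measure_apply_nhds_zero volume hAcompact.measure_lt_top.ne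
      hS.measurableSet (fun a ha => ha.1) (hpos δ hδ) hU.measurableSet hint hFunif
      (Eventually.of_forall fun n => (hlam n).1) hlam0 hδ (b := m + δ) (fun a ha => ?_)
      (fun a ha => by linarith [ha.2])
    exact (not_le.1 fun h => ha.1 ⟨ha.2, h⟩).le
  exact measure_mono_null hKU
    (ProbabilityMeasure.measure_eq_zero_of_tendsto_measure_open hconv hU hαseqU)

/-- STATEMENT 15: Let `A ⊂ ℝ^ℓ` be compact with `Leb(A) > 0`, `F_n, F : A → ℝ` continuous
with `F_n → F` uniformly on `A`, and `λ_n ∈ (0,1]` with `λ_n ↓ 0`.  Let `α_n` be the Gibbs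
probability measures `α_n(da) = e^{F_n(a)/λ_n} da / ∫_A e^{F_n/λ_n} da` (with `da` Lebesgue
measure restricted to `A`).  Assume `Leb({a ∈ A : F(a) ≥ max_A F − ε}) > 0` for every
`ε > 0`, and that `α_n → α` weakly.  Then the support of `α` is contained in
`argmax_A F`; equivalently (as stated here), `α(K) = 0` for every compact `K ⊆ A`
with `sup_K F < max_A F`. -/
theorem gibbs_measures_concentrate_on_argmax
    {l : ℕ}
    (Aset : Set (EuclideanSpace ℝ (Fin l)))
    (hAcompact : IsCompact Aset) (hAne : Aset.Nonempty)
    (hALeb : 0 < MeasureTheory.volume Aset)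
    (Fseq : ℕ → EuclideanSpace ℝ (Fin l) → ℝ) (F : EuclideanSpace ℝ (Fin l) → ℝ)
    (hFcont : ContinuousOn F Aset) (hFncont : ∀ n, ContinuousOn (Fseq n) Aset)
    (hFunif : TendstoUniformlyOn Fseq F atTop Aset)
    (lam : ℕ → ℝ) (hlam : ∀ n, lam n ∈ Set.Ioc (0 : ℝ) 1)
    (hlamanti : Antitone lam) (hlam0 : Tendsto lam atTop (𝓝 (0 : ℝ)))
    -- the Gibbs measures α_n, characterized measure-theoretically
    (αseq : ℕ → ProbabilityMeasure (EuclideanSpace ℝ (Fin l)))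
    (hgibbs : ∀ n, (αseq n : Measure (EuclideanSpace ℝ (Fin l))) =
      ((MeasureTheory.volume.restrict Aset).withDensity
        (fun a => ENNReal.ofReal (Real.exp (Fseq n a / lam n) /
          ∫ a' in Aset, Real.exp (Fseq n a' / lam n)))))
    -- positivity of the near-maximizer sets (a consequence of the cone condition)
    (hpos : ∀ ε : ℝ, 0 < ε →
      0 < MeasureTheory.volume {a ∈ Aset | sSup (F '' Aset) - ε ≤ F a})
    (α : ProbabilityMeasure (EuclideanSpace ℝ (Fin l)))
    (hconv : Tendsto αseq atTop (𝓝 α)) :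
    ∀ K : Set (EuclideanSpace ℝ (Fin l)), IsCompact K → K ⊆ Aset →
      sSup (F '' K) < sSup (F '' Aset) →
      (α : Measure (EuclideanSpace ℝ (Fin l))) K = 0 :=
  gibbs_measures_concentrate_on_argmax_general Aset hAcompact Fseq F hFcont hFncont hFunif lam hlam
    hlam0 αseq hgibbs hpos α hconv
end

section
/- In the control framework, under the continuity assumptions on P^0 (in (a,μ)), on f^0 and g^0, and on P^1, f^1 and g^1, the set-valued mapping D : 𝒜^0×C_μ → 2^𝒱, D(α^0,μ) := B(α^0,μ) ∩ C(α^0,μ), has a closed graph: if (α^{0,n},μ^n) → (α^0,μ) in 𝒜^0×C_μ and v^n ∈ D(α^{0,n},μ^n) with v^n → v in 𝒱, then v ∈ D(α^0,μ). -/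
open MeasureTheory Filter Topology
open scoped NNReal ENNReal

section ControlFramework

variable {S W A0 A1 : Type*}
variable [MetricSpace S] [CompactSpace S] [Nonempty S]
  [MeasurableSpace S] [BorelSpace S] [SecondCountableTopology S]
variable [Fintype W] [Nonempty W] [TopologicalSpace W] [DiscreteTopology W]
  [MeasurableSpace W] [BorelSpace W]
variable [MetricSpace A0] [CompactSpace A0] [Nonempty A0] [MeasurableSpace A0] [BorelSpace A0]
variable [MetricSpace A1] [CompactSpace A1] [Nonempty A1] [MeasurableSpace A1] [BorelSpace A1]
  [SecondCountableTopology A1]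
variable {T : ℕ}

variable (P0c : Fin T → W → A0 → ProbabilityMeasure (S × A1) → ProbabilityMeasure W)
variable (P1c : Fin T → S → W → A1 → ProbabilityMeasure (S × A1) → ProbabilityMeasure S)
variable (f1 : Fin T → S → W → A1 → ProbabilityMeasure (S × A1) → ℝ)
variable (g1 : S → W → ProbabilityMeasure S → ℝ)

/-- `π⁰_{t+1}(u,{u'};α⁰_t(u),μ_t(u)) = ∫_{A⁰} P⁰_{t+1}(u,a,μ_t(u),{u'}) α⁰_t(u)(da)`. -/
noncomputable def pi0c (t : Fin T) (u : W) (α : ProbabilityMeasure A0)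
    (μ : ProbabilityMeasure (S × A1)) (u' : W) : ℝ :=
  ∫ a, ((P0c t u a μ : Measure W) {u'}).toReal ∂(α : Measure A0)

/-- The minor player's value function by backward induction, indexed by the number `j` of
periods remaining before the horizon `T`: `Vauxc α⁰ μ j = V^{1,α⁰,μ}_{T-j}`, solving the
Bellman equation
`V_t(x,u) = max_{a∈A¹} { f¹_t(x,u,a,μ_t(u)) + ∫ V_{t+1}(x',u') π_{t+1}(x,u,a;α⁰_t(u),μ_t(u);dx',du') }`
with terminal condition `V_T(x,u) = g¹(x,u,μ_T(u))`. -/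
noncomputable def Vauxc (α0 : Fin T → W → ProbabilityMeasure A0)
    (μf : (Fin T → W → ProbabilityMeasure (S × A1)) × (W → ProbabilityMeasure S)) :
    ℕ → S → W → ℝ
  | 0, x, u => g1 x u (μf.2 u)
  | (j + 1), x, u =>
      if h : T - (j + 1) < T then
        ⨆ a : A1,
          (f1 ⟨T - (j + 1), h⟩ x u a (μf.1 ⟨T - (j + 1), h⟩ u) +
            ∑ u' : W, pi0c P0c ⟨T - (j + 1), h⟩ u (α0 ⟨T - (j + 1), h⟩ u)
                (μf.1 ⟨T - (j + 1), h⟩ u) u' *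
              ∫ x', Vauxc α0 μf j x' u'
                ∂(P1c ⟨T - (j + 1), h⟩ x u a (μf.1 ⟨T - (j + 1), h⟩ u) : Measure S))
      else g1 x u (μf.2 u)

/-- The minor player's value function `V^{1,α⁰,μ}_t` at calendar time `t`. -/
noncomputable def Vtimec (α0 : Fin T → W → ProbabilityMeasure A0)
    (μf : (Fin T → W → ProbabilityMeasure (S × A1)) × (W → ProbabilityMeasure S))
    (t : ℕ) (x : S) (u : W) : ℝ :=
  Vauxc P0c P1c f1 g1 α0 μf (T - t) x u

/-- The Bellman integrand at time `t`:
`Q_t(x,u,a) = f¹_t(x,u,a,μ_t(u)) + ∫ V^{1,α⁰,μ}_{t+1} dπ_{t+1}(x,u,a;α⁰_t(u),μ_t(u))`. -/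
noncomputable def Qfun (α0 : Fin T → W → ProbabilityMeasure A0)
    (μf : (Fin T → W → ProbabilityMeasure (S × A1)) × (W → ProbabilityMeasure S))
    (t : Fin T) (x : S) (u : W) (a : A1) : ℝ :=
  f1 t x u a (μf.1 t u) +
    ∑ u' : W, pi0c P0c t u (α0 t u) (μf.1 t u) u' *
      ∫ x', Vtimec P0c P1c f1 g1 α0 μf ((t : ℕ) + 1) x' u'
        ∂(P1c t x u a (μf.1 t u) : Measure S)

/-- `B(α⁰,μ)`: state-action flows giving full mass, at each time, to the set of
Bellman maximizers. -/
def Bset (α0 : Fin T → W → ProbabilityMeasure A0)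
    (μf : (Fin T → W → ProbabilityMeasure (S × A1)) × (W → ProbabilityMeasure S)) :
    Set ((Fin T → ProbabilityMeasure (S × W × A1)) × ProbabilityMeasure (S × W)) :=
  {v | ∀ t : Fin T,
    (v.1 t : Measure (S × W × A1))
      {q : S × W × A1 | Qfun P0c P1c f1 g1 α0 μf t q.1 q.2.1 q.2.2 =
        ⨆ a' : A1, Qfun P0c P1c f1 g1 α0 μf t q.1 q.2.1 a'} = 1}

/-- One-step transition applied to a test function `f` on `S × W`:
`(x,u,a) ↦ ∫_{S×W} f dπ_{t+1}(x,u,a;α⁰_t(u),μ_t(u))`. -/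
noncomputable def stepTest (α0 : Fin T → W → ProbabilityMeasure A0)
    (μf : (Fin T → W → ProbabilityMeasure (S × A1)) × (W → ProbabilityMeasure S))
    (t : Fin T) (f : S → W → ℝ) (q : S × W × A1) : ℝ :=
  ∑ u' : W, pi0c P0c t q.2.1 (α0 t q.2.1) (μf.1 t q.2.1) u' *
    ∫ x', f x' u' ∂(P1c t q.1 q.2.1 q.2.2 (μf.1 t q.2.1) : Measure S)

/-- `C(α⁰,μ)`: state-action flows consistent with the controlled dynamics and the
initial law `m₀*` (expressed through bounded continuous test functions). -/
def Cset (m0 : ProbabilityMeasure (S × W))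
    (α0 : Fin T → W → ProbabilityMeasure A0)
    (μf : (Fin T → W → ProbabilityMeasure (S × A1)) × (W → ProbabilityMeasure S)) :
    Set ((Fin T → ProbabilityMeasure (S × W × A1)) × ProbabilityMeasure (S × W)) :=
  {v |
    (∀ h : 0 < T, ∀ f : S → W → ℝ, Continuous (fun q : S × W => f q.1 q.2) →
      ∫ q : S × W × A1, f q.1 q.2.1 ∂(v.1 ⟨0, h⟩ : Measure (S × W × A1)) =
        ∫ q : S × W, f q.1 q.2 ∂(m0 : Measure (S × W))) ∧
    (∀ (t : Fin T) (h : (t : ℕ) + 1 < T),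
      ∀ f : S → W → ℝ, Continuous (fun q : S × W => f q.1 q.2) →
      ∫ q : S × W × A1, f q.1 q.2.1 ∂(v.1 ⟨(t : ℕ) + 1, h⟩ : Measure (S × W × A1)) =
        ∫ q, stepTest P0c P1c α0 μf t f q ∂(v.1 t : Measure (S × W × A1))) ∧
    (∀ h : 0 < T, ∀ f : S → W → ℝ, Continuous (fun q : S × W => f q.1 q.2) →
      ∫ q : S × W, f q.1 q.2 ∂(v.2 : Measure (S × W)) =
        ∫ q, stepTest P0c P1c α0 μf ⟨T - 1, Nat.sub_lt h Nat.one_pos⟩ f q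
          ∂(v.1 ⟨T - 1, Nat.sub_lt h Nat.one_pos⟩ : Measure (S × W × A1)))}

/-- `D(α⁰,μ) = B(α⁰,μ) ∩ C(α⁰,μ)`: the optimal state-action flows of the minor player. -/
def Dset (m0 : ProbabilityMeasure (S × W))
    (α0 : Fin T → W → ProbabilityMeasure A0)
    (μf : (Fin T → W → ProbabilityMeasure (S × A1)) × (W → ProbabilityMeasure S)) :
    Set ((Fin T → ProbabilityMeasure (S × W × A1)) × ProbabilityMeasure (S × W)) :=
  Bset P0c P1c f1 g1 α0 μf ∩ Cset P0c P1c m0 α0 μf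

/-- The conditioning mapping `Γ : 𝒱 → 2^{C_μ}`, sending a state-action flow `v` to all
mean-field flows `μ` obtained by disintegrating `v` over the major player's coordinate:
`v_t(dx,du,da) = μ_t(u)(dx,da) (v_t|_W)(du)` for `t < T` and
`v_T(dx,du) = μ_T(u)(dx) (v_T|_W)(du)`. -/
def Gammac (v : (Fin T → ProbabilityMeasure (S × W × A1)) × ProbabilityMeasure (S × W)) :
    Set ((Fin T → W → ProbabilityMeasure (S × A1)) × (W → ProbabilityMeasure S)) :=
  {μf | (∀ (t : Fin T) (u : W) (B : Set (S × A1)), MeasurableSet B →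
      (v.1 t : Measure (S × W × A1)) {q : S × W × A1 | (q.1, q.2.2) ∈ B ∧ q.2.1 = u} =
        (μf.1 t u : Measure (S × A1)) B *
          (v.1 t : Measure (S × W × A1)) {q : S × W × A1 | q.2.1 = u}) ∧
    (∀ (u : W) (B : Set S), MeasurableSet B →
      (v.2 : Measure (S × W)) (B ×ˢ ({u} : Set W)) =
        (μf.2 u : Measure S) B *
          (v.2 : Measure (S × W)) (Set.univ ×ˢ ({u} : Set W)))}

end ControlFramework

/-! Every object entering `B` and `C` depends jointly continuously on the data `(α⁰, μ)` and on
the state-action variables. For the value functions this is a backward induction: integrating a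
jointly continuous integrand against a continuously varying probability measure on a compact
space, and maximising over the compact action space `A¹`, both preserve joint continuity. Hence
the optimality gap `max_{a'} Q_t(x, u, a') - Q_t(x, u, a) ≥ 0` is jointly continuous, and `v_t`
charges its zero set exactly when `∫ gap dv_t = 0`, a closed condition on `((α⁰, μ), v)`. The
conditions defining `C` are equalities between integrals of such integrands, hence closed as well.
So the graph of `D` is closed. -/

open BoundedContinuousFunction

section General

variable {Z X : Type*} [TopologicalSpace Z] [TopologicalSpace X]

theorem continuous_dependent_of_discreteTopology {W β : Type*} [TopologicalSpace W]
    [DiscreteTopology W] [TopologicalSpace β] {F : W → Z → β} (hF : ∀ w, Continuous (F w))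
    {g : Z → W} (hg : Continuous g) : Continuous fun z => F (g z) z :=
  ((continuous_prod_of_discrete_left (f := ↿F)).mpr hF).comp (hg.prodMk continuous_id)

theorem continuous_iSup_of_compactSpace {α : Type*} [ConditionallyCompleteLinearOrder α]
    [TopologicalSpace α] [OrderTopology α] [CompactSpace X] {F : Z → X → α}
    (hF : Continuous ↿F) : Continuous fun z => ⨆ x, F z x := by
  simpa only [Set.image_univ, sSup_range] using isCompact_univ.continuous_sSup hF

variable [MeasurableSpace X] [OpensMeasurableSpace X]

theorem MeasureTheory.ProbabilityMeasure.continuous_integral_boundedContinuousFunction_prod :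
    Continuous fun y : (X →ᵇ ℝ) × ProbabilityMeasure X => ∫ x, y.1 x ∂(y.2 : Measure X) := by
  refine continuous_iff_continuousAt.2 fun ⟨g₀, ν₀⟩ => ?_
  have hsplit : ∀ y : (X →ᵇ ℝ) × ProbabilityMeasure X,
      ∫ x, y.1 x ∂(y.2 : Measure X) =
        ∫ x, (y.1 - g₀) x ∂(y.2 : Measure X) + ∫ x, g₀ x ∂(y.2 : Measure X) := fun y => by
    rw [← integral_add ((y.1 - g₀).integrable _) (g₀.integrable _)]
    simp
  have hsmall : Tendsto (fun y : (X →ᵇ ℝ) × ProbabilityMeasure X =>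
      ∫ x, (y.1 - g₀) x ∂(y.2 : Measure X)) (𝓝 (g₀, ν₀)) (𝓝 0) := by
    refine squeeze_zero_norm (fun y => (y.1 - g₀).norm_integral_le_norm _) ?_
    simpa using ((continuous_fst.sub continuous_const).norm.tendsto (g₀, ν₀) :
      Tendsto (fun y : (X →ᵇ ℝ) × ProbabilityMeasure X => ‖y.1 - g₀‖) _ _)
  have hfixed := ((ProbabilityMeasure.continuous_integral_boundedContinuousFunction g₀).comp
    continuous_snd).tendsto (g₀, ν₀)
  simpa [ContinuousAt, hsplit] using hsmall.add hfixed

theorem Continuous.integral_probabilityMeasure [CompactSpace X] {f : Z → X → ℝ}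
    (hf : Continuous ↿f) {ν : Z → ProbabilityMeasure X} (hν : Continuous ν) :
    Continuous fun z => ∫ x, f z x ∂(ν z : Measure X) := by
  let F : Z → X →ᵇ ℝ := fun z => mkOfCompact ((ContinuousMap.mk _ hf).curry z)
  have hF : Continuous F := (ContinuousMap.isometryEquivBoundedOfCompact X ℝ).continuous.comp
    (ContinuousMap.curry _).continuous
  exact ProbabilityMeasure.continuous_integral_boundedContinuousFunction_prod.comp (hF.prodMk hν)

theorem MeasureTheory.ProbabilityMeasure.continuous_integral_of_continuous [CompactSpace X]
    {g : X → ℝ} (hg : Continuous g) :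
    Continuous fun ν : ProbabilityMeasure X => ∫ x, g x ∂(ν : Measure X) :=
  ProbabilityMeasure.continuous_integral_boundedContinuousFunction (mkOfCompact ⟨g, hg⟩)

theorem measure_setOf_eq_zero_eq_one_iff_integral_eq_zero [CompactSpace X]
    (ν : ProbabilityMeasure X) {g : X → ℝ} (hg : Continuous g) (hg0 : 0 ≤ g) :
    (ν : Measure X) {x | g x = 0} = 1 ↔ ∫ x, g x ∂(ν : Measure X) = 0 := by
  rw [integral_eq_zero_iff_of_nonneg hg0
      (hg.integrable_of_hasCompactSupport (HasCompactSupport.of_compactSpace g)),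
    ← prob_compl_eq_zero_iff (isClosed_eq hg continuous_const).measurableSet]
  rfl

theorem isClosed_setOf_measure_setOf_eq_zero_eq_one [CompactSpace X] {G : Z → X → ℝ}
    (hG : Continuous ↿G) (hG0 : ∀ z, 0 ≤ G z) :
    IsClosed {y : Z × ProbabilityMeasure X | (y.2 : Measure X) {x | G y.1 x = 0} = 1} := by
  have hset : {y : Z × ProbabilityMeasure X | (y.2 : Measure X) {x | G y.1 x = 0} = 1} =
      {y | ∫ x, G y.1 x ∂(y.2 : Measure X) = 0} := Set.ext fun y =>
    measure_setOf_eq_zero_eq_one_iff_integral_eq_zero y.2 (hG.comp (.prodMk_right _)) (hG0 _)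
  rw [hset]
  exact isClosed_eq (Continuous.integral_probabilityMeasure
    (f := fun y : Z × ProbabilityMeasure X => G y.1)
    (hG.comp ((continuous_fst.comp continuous_fst).prodMk continuous_snd)) continuous_snd)
    continuous_const

theorem MeasureTheory.ProbabilityMeasure.continuous_toReal_apply_singleton {W : Type*}
    [TopologicalSpace W] [DiscreteTopology W] [Finite W] [MeasurableSpace W]
    [MeasurableSingletonClass W] (u : W) :
    Continuous fun ν : ProbabilityMeasure W => ((ν : Measure W) {u}).toReal := by
  simp_rw [← measureReal_def, ← integral_indicator_one (measurableSet_singleton u)]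
  exact ProbabilityMeasure.continuous_integral_of_continuous continuous_of_discreteTopology

end General

section Framework

variable {S W A0 A1 : Type*} [MeasurableSpace S] [Fintype W] [MeasurableSpace W]
  [MeasurableSpace A0] [MeasurableSpace A1] {T : ℕ}
  (P0c : Fin T → W → A0 → ProbabilityMeasure (S × A1) → ProbabilityMeasure W)
  (P1c : Fin T → S → W → A1 → ProbabilityMeasure (S × A1) → ProbabilityMeasure S)
  (f1 : Fin T → S → W → A1 → ProbabilityMeasure (S × A1) → ℝ)
  (g1 : S → W → ProbabilityMeasure S → ℝ)

-- instances on the graph space `(𝒜⁰ × C_μ) × 𝒱` exceed the default size limit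
set_option synthInstance.maxSize 256

local notation "𝒜⁰" => Fin T → W → ProbabilityMeasure A0
local notation "C_μ" => (Fin T → W → ProbabilityMeasure (S × A1)) × (W → ProbabilityMeasure S)
local notation "𝒱" => (Fin T → ProbabilityMeasure (S × W × A1)) × ProbabilityMeasure (S × W)

noncomputable def bellmanQ (α0 : 𝒜⁰) (μf : C_μ) (t : Fin T) (F : S → W → ℝ) (x : S) (u : W)
    (a : A1) : ℝ :=
  f1 t x u a (μf.1 t u) + stepTest P0c P1c α0 μf t F (x, u, a)

theorem Vauxc_succ (α0 : 𝒜⁰) (μf : C_μ) (j : ℕ) (x : S) (u : W) :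
    Vauxc P0c P1c f1 g1 α0 μf (j + 1) x u =
      if h : T - (j + 1) < T then
        ⨆ a, bellmanQ P0c P1c f1 α0 μf ⟨T - (j + 1), h⟩ (Vauxc P0c P1c f1 g1 α0 μf j) x u a
      else g1 x u (μf.2 u) :=
  rfl

theorem Qfun_eq_bellmanQ (α0 : 𝒜⁰) (μf : C_μ) (t : Fin T) :
    Qfun P0c P1c f1 g1 α0 μf t =
      bellmanQ P0c P1c f1 α0 μf t (Vtimec P0c P1c f1 g1 α0 μf ((t : ℕ) + 1)) :=
  rfl

noncomputable def bellmanGap (α0 : 𝒜⁰) (μf : C_μ) (t : Fin T) (q : S × W × A1) : ℝ :=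
  (⨆ a, Qfun P0c P1c f1 g1 α0 μf t q.1 q.2.1 a) - Qfun P0c P1c f1 g1 α0 μf t q.1 q.2.1 q.2.2

theorem setOf_Qfun_eq_iSup (α0 : 𝒜⁰) (μf : C_μ) (t : Fin T) :
    {q : S × W × A1 | Qfun P0c P1c f1 g1 α0 μf t q.1 q.2.1 q.2.2 =
      ⨆ a, Qfun P0c P1c f1 g1 α0 μf t q.1 q.2.1 a} =
      {q | bellmanGap P0c P1c f1 g1 α0 μf t q = 0} :=
  Set.ext fun _ => (sub_eq_zero.trans eq_comm).symm

variable [MetricSpace S] [OpensMeasurableSpace S]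
  [TopologicalSpace W] [DiscreteTopology W] [MeasurableSingletonClass W]
  [TopologicalSpace A0] [CompactSpace A0] [OpensMeasurableSpace A0]
  [TopologicalSpace A1] [OpensMeasurableSpace A1] [SecondCountableTopology A1]
  {P0c P1c f1 g1}

structure TransitionsContinuous
    (P0c : Fin T → W → A0 → ProbabilityMeasure (S × A1) → ProbabilityMeasure W)
    (P1c : Fin T → S → W → A1 → ProbabilityMeasure (S × A1) → ProbabilityMeasure S) : Prop where
  major : ∀ t u, Continuous fun z : A0 × ProbabilityMeasure (S × A1) => P0c t u z.1 z.2
  minor : ∀ t u, Continuous fun z : S × A1 × ProbabilityMeasure (S × A1) =>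
    P1c t z.1 u z.2.1 z.2.2

structure MinorRewardsContinuous (f1 : Fin T → S → W → A1 → ProbabilityMeasure (S × A1) → ℝ)
    (g1 : S → W → ProbabilityMeasure S → ℝ) : Prop where
  running : ∀ t u, Continuous fun z : S × A1 × ProbabilityMeasure (S × A1) =>
    f1 t z.1 u z.2.1 z.2.2
  terminal : ∀ u, Continuous fun z : S × ProbabilityMeasure S => g1 z.1 u z.2

theorem continuous_pi0c
    (hP0c : ∀ t u, Continuous fun z : A0 × ProbabilityMeasure (S × A1) => P0c t u z.1 z.2)
    (t : Fin T) (u u' : W) :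
    Continuous fun z : ProbabilityMeasure A0 × ProbabilityMeasure (S × A1) =>
      pi0c P0c t u z.1 z.2 u' :=
  Continuous.integral_probabilityMeasure
    (f := fun z a => ((P0c t u a z.2 : Measure W) {u'}).toReal)
    ((ProbabilityMeasure.continuous_toReal_apply_singleton u').comp
      ((hP0c t u).comp (continuous_snd.prodMk (continuous_snd.comp continuous_fst))))
    continuous_fst

variable [CompactSpace S]

theorem continuous_stepTest (hP : TransitionsContinuous P0c P1c) (t : Fin T)
    {Z : Type*} [TopologicalSpace Z] {p : Z → 𝒜⁰ × C_μ} {F : Z → S → W → ℝ}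
    {q : Z → S × W × A1} (hp : Continuous p)
    (hF : ∀ u, Continuous fun y : Z × S => F y.1 y.2 u) (hq : Continuous q) :
    Continuous fun z => stepTest P0c P1c (p z).1 (p z).2 t (F z) (q z) := by
  have hμ : ∀ u, Continuous fun z => (p z).2.1 t u := fun u => by fun_prop
  have hfiber : ∀ u, Continuous fun z => ∑ u', pi0c P0c t u ((p z).1 t u) ((p z).2.1 t u) u' *
      ∫ x', F z x' u' ∂(P1c t (q z).1 u (q z).2.2 ((p z).2.1 t u) : Measure S) := fun u =>
    continuous_finsetSum _ fun u' _ => Continuous.mul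
      ((continuous_pi0c hP.major t u u').comp
        ((by fun_prop : Continuous fun z => (p z).1 t u).prodMk (hμ u)))
      (Continuous.integral_probabilityMeasure (f := fun z x' => F z x' u') (hF u')
        ((hP.minor t u).comp ((continuous_fst.comp hq).prodMk
          ((continuous_snd.comp (continuous_snd.comp hq)).prodMk (hμ u)))))
  exact continuous_dependent_of_discreteTopology hfiber (by fun_prop)

theorem continuous_bellmanQ
    (hP : TransitionsContinuous P0c P1c)
    (hf1 : ∀ t u, Continuous fun z : S × A1 × ProbabilityMeasure (S × A1) =>
      f1 t z.1 u z.2.1 z.2.2)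
    (t : Fin T) {Z : Type*} [TopologicalSpace Z] {p : Z → 𝒜⁰ × C_μ}
    {F : Z → S → W → ℝ} {x : Z → S} {u : Z → W} {a : Z → A1} (hp : Continuous p)
    (hF : ∀ u, Continuous fun y : Z × S => F y.1 y.2 u) (hx : Continuous x) (hu : Continuous u)
    (ha : Continuous a) :
    Continuous fun z => bellmanQ P0c P1c f1 (p z).1 (p z).2 t (F z) (x z) (u z) (a z) :=
  (continuous_dependent_of_discreteTopology (fun w => (hf1 t w).comp
      (hx.prodMk (ha.prodMk (by fun_prop : Continuous fun z => (p z).2.1 t w)))) hu).add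
    (continuous_stepTest hP t hp hF (hx.prodMk (hu.prodMk ha)))

variable [CompactSpace A1]

theorem continuous_Vauxc
    (hP : TransitionsContinuous P0c P1c) (hr : MinorRewardsContinuous f1 g1)
    (j : ℕ) (u : W) :
    Continuous fun y : (𝒜⁰ × C_μ) × S => Vauxc P0c P1c f1 g1 y.1.1 y.1.2 j y.2 u := by
  induction j generalizing u with
  | zero => exact (hr.terminal u).comp (continuous_snd.prodMk (by fun_prop))
  | succ j ih =>
    simp only [Vauxc_succ]
    by_cases h : T - (j + 1) < T
    · simp only [dif_pos h]
      refine continuous_iSup_of_compactSpace (F := fun (y : (𝒜⁰ × C_μ) × S) a =>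
        bellmanQ P0c P1c f1 y.1.1 y.1.2 _ (Vauxc P0c P1c f1 g1 y.1.1 y.1.2 j) y.2 u a) ?_
      exact continuous_bellmanQ hP hr.running _ (by fun_prop)
        (fun u' => (ih u').comp
          ((continuous_fst.comp (continuous_fst.comp continuous_fst)).prodMk continuous_snd))
        (by fun_prop) continuous_const (by fun_prop)
    · simp only [dif_neg h]
      exact (hr.terminal u).comp (continuous_snd.prodMk (by fun_prop))

theorem continuous_Qfun
    (hP : TransitionsContinuous P0c P1c) (hr : MinorRewardsContinuous f1 g1)
    (t : Fin T) {Z : Type*} [TopologicalSpace Z] {p : Z → 𝒜⁰ × C_μ} {x : Z → S} {u : Z → W}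
    {a : Z → A1} (hp : Continuous p) (hx : Continuous x) (hu : Continuous u)
    (ha : Continuous a) :
    Continuous fun z => Qfun P0c P1c f1 g1 (p z).1 (p z).2 t (x z) (u z) (a z) := by
  simp only [Qfun_eq_bellmanQ]
  exact continuous_bellmanQ hP hr.running t hp
    (fun w => (continuous_Vauxc hP hr _ w).comp
      ((hp.comp continuous_fst).prodMk continuous_snd)) hx hu ha

theorem continuous_bellmanGap
    (hP : TransitionsContinuous P0c P1c) (hr : MinorRewardsContinuous f1 g1)
    (t : Fin T) :
    Continuous fun y : (𝒜⁰ × C_μ) × (S × W × A1) => bellmanGap P0c P1c f1 g1 y.1.1 y.1.2 t y.2 :=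
  (continuous_iSup_of_compactSpace (F := fun (y : (𝒜⁰ × C_μ) × (S × W × A1)) a =>
      Qfun P0c P1c f1 g1 y.1.1 y.1.2 t y.2.1 y.2.2.1 a)
    (continuous_Qfun hP hr t (by fun_prop) (by fun_prop) (by fun_prop) continuous_snd)).sub
    (continuous_Qfun hP hr t continuous_fst (by fun_prop) (by fun_prop) (by fun_prop))

theorem bellmanGap_nonneg
    (hP : TransitionsContinuous P0c P1c) (hr : MinorRewardsContinuous f1 g1)
    (α0 : 𝒜⁰) (μf : C_μ) (t : Fin T) (q : S × W × A1) :
    0 ≤ bellmanGap P0c P1c f1 g1 α0 μf t q := by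
  have hc : Continuous fun a => Qfun P0c P1c f1 g1 α0 μf t q.1 q.2.1 a :=
    continuous_Qfun hP hr t (p := fun _ => (α0, μf)) continuous_const
      continuous_const continuous_const continuous_id
  exact sub_nonneg.2 (le_ciSup (isCompact_range hc).bddAbove _)

theorem isClosed_setOf_mem_Bset
    (hP : TransitionsContinuous P0c P1c) (hr : MinorRewardsContinuous f1 g1) :
    IsClosed {z : (𝒜⁰ × C_μ) × 𝒱 | z.2 ∈ Bset P0c P1c f1 g1 z.1.1 z.1.2} := by
  simp only [Bset, setOf_Qfun_eq_iSup, Set.mem_iInter, Set.mem_ofPred_eq, Set.ofPred_forall]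
  exact isClosed_iInter fun t =>
    (isClosed_setOf_measure_setOf_eq_zero_eq_one
      (G := fun p : 𝒜⁰ × C_μ => bellmanGap P0c P1c f1 g1 p.1 p.2 t)
      (continuous_bellmanGap hP hr t)
      (fun p => bellmanGap_nonneg hP hr p.1 p.2 t)).preimage
    (by fun_prop : Continuous fun z : (𝒜⁰ × C_μ) × 𝒱 => (z.1, z.2.1 t))

theorem continuous_integral_stepTest (hP : TransitionsContinuous P0c P1c) (t : Fin T)
    {f : S → W → ℝ} (hf : Continuous fun q : S × W => f q.1 q.2) :
    Continuous fun y : (𝒜⁰ × C_μ) × ProbabilityMeasure (S × W × A1) =>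
      ∫ q, stepTest P0c P1c y.1.1 y.1.2 t f q ∂(y.2 : Measure (S × W × A1)) :=
  Continuous.integral_probabilityMeasure
    (f := fun (y : (𝒜⁰ × C_μ) × ProbabilityMeasure (S × W × A1)) q =>
      stepTest P0c P1c y.1.1 y.1.2 t f q)
    (continuous_stepTest hP t (by fun_prop)
      (fun u => hf.comp (continuous_snd.prodMk continuous_const)) continuous_snd)
    continuous_snd

theorem isClosed_setOf_mem_Cset (hP : TransitionsContinuous P0c P1c)
    (m0 : ProbabilityMeasure (S × W)) :
    IsClosed {z : (𝒜⁰ × C_μ) × 𝒱 | z.2 ∈ Cset P0c P1c m0 z.1.1 z.1.2} := by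
  simp only [Cset, Set.mem_ofPred_eq]
  simp only [Set.ofPred_and, Set.ofPred_forall]
  have hmarginal : ∀ {f : S → W → ℝ}, Continuous (fun q : S × W => f q.1 q.2) →
      Continuous fun ν : ProbabilityMeasure (S × W × A1) =>
        ∫ q : S × W × A1, f q.1 q.2.1 ∂(ν : Measure _) :=
    fun hf => ProbabilityMeasure.continuous_integral_of_continuous
      (hf.comp (continuous_fst.prodMk (continuous_fst.comp continuous_snd)))
  refine .inter ?_ (.inter ?_ ?_)
  · exact isClosed_iInter fun h => isClosed_iInter fun f => isClosed_iInter fun hf =>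
      isClosed_eq ((hmarginal hf).comp (by fun_prop)) continuous_const
  · exact isClosed_iInter fun t => isClosed_iInter fun h => isClosed_iInter fun f =>
      isClosed_iInter fun hf => isClosed_eq ((hmarginal hf).comp (by fun_prop))
        ((continuous_integral_stepTest hP t hf).comp
          (by fun_prop : Continuous fun z : (𝒜⁰ × C_μ) × 𝒱 => (z.1, z.2.1 t)))
  · exact isClosed_iInter fun h => isClosed_iInter fun f => isClosed_iInter fun hf =>
      isClosed_eq ((ProbabilityMeasure.continuous_integral_of_continuous hf).comp
        (by fun_prop : Continuous fun z : (𝒜⁰ × C_μ) × 𝒱 => z.2.2))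
        ((continuous_integral_stepTest hP _ hf).comp
          (by fun_prop : Continuous fun z : (𝒜⁰ × C_μ) × 𝒱 =>
            (z.1, z.2.1 ⟨T - 1, Nat.sub_lt h Nat.one_pos⟩)))

end Framework

theorem Dset_closedGraph_general
    {S W A0 A1 : Type*}
    [MetricSpace S] [CompactSpace S]
    [MeasurableSpace S] [BorelSpace S]
    [Fintype W] [TopologicalSpace W] [DiscreteTopology W]
    [MeasurableSpace W] [BorelSpace W]
    [MetricSpace A0] [CompactSpace A0] [MeasurableSpace A0] [BorelSpace A0]
    [MetricSpace A1] [CompactSpace A1] [MeasurableSpace A1] [BorelSpace A1]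
    {T : ℕ}
    (P0c : Fin T → W → A0 → ProbabilityMeasure (S × A1) → ProbabilityMeasure W)
    (P1c : Fin T → S → W → A1 → ProbabilityMeasure (S × A1) → ProbabilityMeasure S)
    (f1 : Fin T → S → W → A1 → ProbabilityMeasure (S × A1) → ℝ)
    (g1 : S → W → ProbabilityMeasure S → ℝ)
    -- continuity of the minor player's transition kernel in (x,a,μ)
    (hP1c : ∀ (t : Fin T) (u : W), Continuous fun z : S × A1 × ProbabilityMeasure (S × A1) =>
      P1c t z.1 u z.2.1 z.2.2)
    -- continuity of the major player's transition kernel in (a,μ)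
    (hP0c : ∀ (t : Fin T) (u : W), Continuous fun z : A0 × ProbabilityMeasure (S × A1) =>
      P0c t u z.1 z.2)
    -- continuity of the minor player's rewards
    (hf1 : ∀ (t : Fin T) (u : W), Continuous fun z : S × A1 × ProbabilityMeasure (S × A1) =>
      f1 t z.1 u z.2.1 z.2.2)
    (hg1 : ∀ u : W, Continuous fun z : S × ProbabilityMeasure S => g1 z.1 u z.2)
    (m0 : ProbabilityMeasure (S × W))
    (α0seq : ℕ → Fin T → W → ProbabilityMeasure A0)
    (α0 : Fin T → W → ProbabilityMeasure A0)
    (μseq : ℕ → (Fin T → W → ProbabilityMeasure (S × A1)) × (W → ProbabilityMeasure S))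
    (μf : (Fin T → W → ProbabilityMeasure (S × A1)) × (W → ProbabilityMeasure S))
    (vseq : ℕ → (Fin T → ProbabilityMeasure (S × W × A1)) × ProbabilityMeasure (S × W))
    (v : (Fin T → ProbabilityMeasure (S × W × A1)) × ProbabilityMeasure (S × W))
    (hα0 : Tendsto α0seq atTop (𝓝 α0))
    (hμ : Tendsto μseq atTop (𝓝 μf))
    (hv : ∀ n, vseq n ∈ Dset P0c P1c f1 g1 m0 (α0seq n) (μseq n))
    (hvlim : Tendsto vseq atTop (𝓝 v)) :
    v ∈ Dset P0c P1c f1 g1 m0 α0 μf := by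
  set_option synthInstance.maxSize 256 in
  exact ((isClosed_setOf_mem_Bset ⟨hP0c, hP1c⟩ ⟨hf1, hg1⟩).inter
    (isClosed_setOf_mem_Cset ⟨hP0c, hP1c⟩ m0)).mem_of_tendsto
      ((hα0.prodMk_nhds hμ).prodMk_nhds hvlim) (.of_forall hv)

/-- STATEMENT 17: In the control framework, under the continuity assumptions on `P⁰`
(in `(a,μ)`), on `f⁰` and `g⁰`, and on `P¹`, `f¹` and `g¹`, the set-valued mapping
`D : 𝒜⁰ × C_μ → 2^𝒱`, `D(α⁰,μ) = B(α⁰,μ) ∩ C(α⁰,μ)`, has a closed graph: if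
`(α⁰ⁿ,μⁿ) → (α⁰,μ)` in `𝒜⁰ × C_μ` and `vⁿ ∈ D(α⁰ⁿ,μⁿ)` with `vⁿ → v` in `𝒱`, then
`v ∈ D(α⁰,μ)`. -/
theorem Dset_closedGraph
    {S W A0 A1 : Type*}
    [MetricSpace S] [CompactSpace S] [Nonempty S]
    [MeasurableSpace S] [BorelSpace S] [SecondCountableTopology S]
    [Fintype W] [Nonempty W] [TopologicalSpace W] [DiscreteTopology W]
    [MeasurableSpace W] [BorelSpace W]
    [MetricSpace A0] [CompactSpace A0] [Nonempty A0] [MeasurableSpace A0] [BorelSpace A0]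
    [MetricSpace A1] [CompactSpace A1] [Nonempty A1] [MeasurableSpace A1] [BorelSpace A1]
    [SecondCountableTopology A1]
    {T : ℕ}
    (P0c : Fin T → W → A0 → ProbabilityMeasure (S × A1) → ProbabilityMeasure W)
    (P1c : Fin T → S → W → A1 → ProbabilityMeasure (S × A1) → ProbabilityMeasure S)
    (f1 : Fin T → S → W → A1 → ProbabilityMeasure (S × A1) → ℝ)
    (g1 : S → W → ProbabilityMeasure S → ℝ)
    -- continuity of the minor player's transition kernel in (x,a,μ)
    (hP1c : ∀ (t : Fin T) (u : W), Continuous fun z : S × A1 × ProbabilityMeasure (S × A1) =>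
      P1c t z.1 u z.2.1 z.2.2)
    -- continuity of the major player's transition kernel in (a,μ)
    (hP0c : ∀ (t : Fin T) (u : W), Continuous fun z : A0 × ProbabilityMeasure (S × A1) =>
      P0c t u z.1 z.2)
    -- continuity of the minor player's rewards
    (hf1 : ∀ (t : Fin T) (u : W), Continuous fun z : S × A1 × ProbabilityMeasure (S × A1) =>
      f1 t z.1 u z.2.1 z.2.2)
    (hg1 : ∀ u : W, Continuous fun z : S × ProbabilityMeasure S => g1 z.1 u z.2)
    -- continuity of the major player's rewards in (a,μ) resp. μ
    (f0c : Fin T → W → A0 → ProbabilityMeasure (S × A1) → ℝ)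
    (g0c : W → ProbabilityMeasure S → ℝ)
    (hf0c : ∀ (t : Fin T) (u : W), Continuous fun z : A0 × ProbabilityMeasure (S × A1) =>
      f0c t u z.1 z.2)
    (hg0c : ∀ u : W, Continuous fun ν : ProbabilityMeasure S => g0c u ν)
    (m0 : ProbabilityMeasure (S × W))
    (α0seq : ℕ → Fin T → W → ProbabilityMeasure A0)
    (α0 : Fin T → W → ProbabilityMeasure A0)
    (μseq : ℕ → (Fin T → W → ProbabilityMeasure (S × A1)) × (W → ProbabilityMeasure S))
    (μf : (Fin T → W → ProbabilityMeasure (S × A1)) × (W → ProbabilityMeasure S))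
    (vseq : ℕ → (Fin T → ProbabilityMeasure (S × W × A1)) × ProbabilityMeasure (S × W))
    (v : (Fin T → ProbabilityMeasure (S × W × A1)) × ProbabilityMeasure (S × W))
    (hα0 : Tendsto α0seq atTop (𝓝 α0))
    (hμ : Tendsto μseq atTop (𝓝 μf))
    (hv : ∀ n, vseq n ∈ Dset P0c P1c f1 g1 m0 (α0seq n) (μseq n))
    (hvlim : Tendsto vseq atTop (𝓝 v)) :
    v ∈ Dset P0c P1c f1 g1 m0 α0 μf :=
  Dset_closedGraph_general P0c P1c f1 g1 hP1c hP0c hf1 hg1 m0 α0seq α0 μseq μf vseq v hα0 hμ hv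
    hvlim
end
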